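/- arXiv:2510.05811 — 2 statements merged into one kernel-verified Lean document; each statement's English description precedes it below -/
import Mathlib

section
/- Let G be a connected P_6-free finite simple graph in which every edge lies in at most one triangle. Then at most one vertex of G lies in more than one triangle. -/
/-- A simple graph is `P₆`-free if it contains no six distinct vertices
`v₁, …, v₆` with `vᵢv_{i+1}` an edge for all `i`. -/
def P6Free {V : Type*} (G : SimpleGraph V) : Prop :=
  ¬ ∃ v₁ v₂ v₃ v₄ v₅ v₆ : V, ([v₁, v₂, v₃, v₄, v₅, v₆] : List V).Nodup ∧
    G.Adj v₁ v₂ ∧ G.Adj v₂ v₃ ∧ G.Adj v₃ v₄ ∧ G.Adj v₄ v₅ ∧ G.Adj v₅ v₆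

private lemma nodup6 {V : Type*} {a b c d e f : V}
    (h1 : a ≠ b) (h2 : a ≠ c) (h3 : a ≠ d) (h4 : a ≠ e) (h5 : a ≠ f)
    (h6 : b ≠ c) (h7 : b ≠ d) (h8 : b ≠ e) (h9 : b ≠ f)
    (h10 : c ≠ d) (h11 : c ≠ e) (h12 : c ≠ f)
    (h13 : d ≠ e) (h14 : d ≠ f) (h15 : e ≠ f) :
    ([a, b, c, d, e, f] : List V).Nodup := by
  simp [h1, h2, h3, h4, h5, h6, h7, h8, h9, h10, h11, h12, h13, h14, h15]

private lemma tri_struct {V : Type*} [DecidableEq V] {G : SimpleGraph V} {T : Finset V} {w : V}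
    (hT : G.IsNClique 3 T) (hw : w ∈ T) :
    ∃ a b : V, a ≠ b ∧ G.Adj w a ∧ G.Adj w b ∧ G.Adj a b ∧ T = {w, a, b} := by
  obtain ⟨x, y, z, hxy, hxz, hyz, hT3⟩ := Finset.card_eq_three.mp hT.card_eq
  have hcl := hT.isClique
  have hx : x ∈ T := by rw [hT3]; simp
  have hy : y ∈ T := by rw [hT3]; simp
  have hz : z ∈ T := by rw [hT3]; simp
  rw [hT3] at hw
  simp only [Finset.mem_insert, Finset.mem_singleton] at hw
  rcases hw with rfl | rfl | rfl
  · exact ⟨y, z, hyz, hcl hx hy hxy, hcl hx hz hxz, hcl hy hz hyz, hT3⟩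
  · refine ⟨x, z, hxz, hcl hy hx hxy.symm, hcl hy hz hyz, hcl hx hz hxz, ?_⟩
    rw [hT3]; ext t; simp; tauto
  · refine ⟨x, y, hxy, hcl hz hx hxz.symm, hcl hz hy hyz.symm, hcl hx hy hxy, ?_⟩
    rw [hT3]; ext t; simp; tauto

private lemma common_le {V : Type*} [Fintype V] {G : SimpleGraph V}
    (hone : ∀ u v : V, G.Adj u v → {z : V | G.Adj u z ∧ G.Adj v z}.ncard ≤ 1)
    {a b x y : V} (hab : G.Adj a b) (hax : G.Adj a x) (hbx : G.Adj b x)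
    (hay : G.Adj a y) (hby : G.Adj b y) (hxy : x ≠ y) : False := by
  have h := hone a b hab
  have hsub : ({x, y} : Set V) ⊆ {z : V | G.Adj a z ∧ G.Adj b z} := by
    intro z hz
    rcases hz with rfl | hz
    · exact ⟨hax, hbx⟩
    · rcases hz with rfl
      exact ⟨hay, hby⟩
  have h2 : ({x, y} : Set V).ncard ≤ {z : V | G.Adj a z ∧ G.Adj b z}.ncard :=
    Set.ncard_le_ncard hsub (Set.toFinite _)
  rw [Set.ncard_pair hxy] at h2
  omega

private lemma other_elt {V : Type*} [DecidableEq V] {G : SimpleGraph V} {T : Finset V} {w a b s : V}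
    (hT : T = {w, a, b}) (hwa : G.Adj w a) (hwb : G.Adj w b) (hab : G.Adj a b)
    (h : a = s ∨ b = s) :
    ∃ t, G.Adj w s ∧ G.Adj w t ∧ G.Adj s t ∧ T = {w, s, t} := by
  rcases h with rfl | rfl
  · exact ⟨b, hwa, hwb, hab, hT⟩
  · exact ⟨a, hwb, hwa, hab.symm, by rw [hT]; ext t; simp; tauto⟩

private lemma pick_tri {V : Type*} [DecidableEq V] [Fintype V] {G : SimpleGraph V}
    (hone : ∀ u v : V, G.Adj u v → {z : V | G.Adj u z ∧ G.Adj v z}.ncard ≤ 1)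
    {w : V}
    (hw : ∃ T₁ T₂ : Finset V, G.IsNClique 3 T₁ ∧ G.IsNClique 3 T₂ ∧ T₁ ≠ T₂ ∧
      w ∈ T₁ ∧ w ∈ T₂) (s : V) :
    ∃ x y : V, G.Adj w x ∧ G.Adj w y ∧ G.Adj x y ∧ x ≠ s ∧ y ≠ s := by
  obtain ⟨T₁, T₂, h1, h2, hTne, hm1, hm2⟩ := hw
  obtain ⟨a, b, hab, hwa, hwb, hab', hT1⟩ := tri_struct h1 hm1
  obtain ⟨c, d, hcd, hwc, hwd, hcd', hT2⟩ := tri_struct h2 hm2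
  by_cases h : a ≠ s ∧ b ≠ s
  · exact ⟨a, b, hwa, hwb, hab', h.1, h.2⟩
  by_cases h' : c ≠ s ∧ d ≠ s
  · exact ⟨c, d, hwc, hwd, hcd', h'.1, h'.2⟩
  exfalso
  push_neg at h h'
  have hs1 : a = s ∨ b = s := by
    by_cases ha : a = s
    · exact Or.inl ha
    · exact Or.inr (h ha)
  have hs2 : c = s ∨ d = s := by
    by_cases hc : c = s
    · exact Or.inl hc
    · exact Or.inr (h' hc)
  obtain ⟨t₁, hws, hwt₁, hst₁, hT1'⟩ := other_elt hT1 hwa hwb hab' hs1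
  obtain ⟨t₂, _, hwt₂, hst₂, hT2'⟩ := other_elt hT2 hwc hwd hcd' hs2
  have ht : t₁ ≠ t₂ := by
    intro he
    exact hTne (by rw [hT1', hT2', he])
  exact common_le hone hws hwt₁ hst₁ hwt₂ hst₂ ht

private lemma exists_walk_take {V : Type*} {G : SimpleGraph V} {a b : V}
    (W : G.Walk a b) : ∀ i, i ≤ W.length → ∃ p : G.Walk a (W.getVert i), p.length = i := by
  induction W with
  | nil =>
    intro i hi
    simp only [SimpleGraph.Walk.length_nil, Nat.le_zero] at hi
    subst hi
    exact ⟨.nil, rfl⟩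
  | @cons u c b h q ih =>
    intro i hi
    cases i with
    | zero =>
      exact ⟨.nil, rfl⟩
    | succ n =>
      obtain ⟨p, hp⟩ := ih n (by simpa using hi)
      simp only [SimpleGraph.Walk.getVert_cons_succ]
      exact ⟨SimpleGraph.Walk.cons h p, by simp [hp]⟩

private lemma exists_walk_drop {V : Type*} {G : SimpleGraph V} {a b : V}
    (W : G.Walk a b) : ∀ i, ∃ p : G.Walk (W.getVert i) b, p.length = W.length - i := by
  induction W with
  | nil =>
    intro i
    exact ⟨(SimpleGraph.Walk.nil).copy (by cases i <;> rfl) rfl, by simp⟩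
  | @cons u c b h q ih =>
    intro i
    cases i with
    | zero =>
      exact ⟨(SimpleGraph.Walk.cons h q).copy (SimpleGraph.Walk.getVert_zero _).symm rfl,
        by simp⟩
    | succ n =>
      obtain ⟨p, hp⟩ := ih n
      refine ⟨p.copy (SimpleGraph.Walk.getVert_cons_succ _ h).symm rfl, ?_⟩
      simp [hp]

private lemma dist_getVert {V : Type*} {G : SimpleGraph V} {u v : V}
    (hconn : G.Connected) (W : G.Walk u v) (hW : W.length = G.dist u v)
    (i : ℕ) (hi : i ≤ W.length) : G.dist u (W.getVert i) = i := by
  obtain ⟨p, hp⟩ := exists_walk_take W i hi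
  have h1 : G.dist u (W.getVert i) ≤ i := by
    have := G.dist_le p; omega
  obtain ⟨q, hq⟩ := exists_walk_drop W i
  have h2 : G.dist (W.getVert i) v ≤ W.length - i := by
    have := G.dist_le q; omega
  have h3 : G.dist u v ≤ G.dist u (W.getVert i) + G.dist (W.getVert i) v :=
    hconn.dist_triangle
  omega

/-- In a connected `P₆`-free finite simple graph in which every edge lies in at
most one triangle, at most one vertex lies in more than one triangle. -/
theorem stmt5 {V : Type*} [Fintype V] (G : SimpleGraph V) (hconn : G.Connected)
    (hP6 : P6Free G)
    (hone : ∀ u v : V, G.Adj u v → {z : V | G.Adj u z ∧ G.Adj v z}.ncard ≤ 1)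
    (u v : V)
    (hu : ∃ T₁ T₂ : Finset V, G.IsNClique 3 T₁ ∧ G.IsNClique 3 T₂ ∧ T₁ ≠ T₂ ∧
      u ∈ T₁ ∧ u ∈ T₂)
    (hv : ∃ T₁ T₂ : Finset V, G.IsNClique 3 T₁ ∧ G.IsNClique 3 T₂ ∧ T₁ ≠ T₂ ∧
      v ∈ T₁ ∧ v ∈ T₂) :
    u = v := by
  by_contra hne
  have hdpos : 0 < G.dist u v := hconn.pos_dist_of_ne hne
  classical
  rcases Nat.lt_or_ge (G.dist u v) 3 with hdlt | hd3
  · have hd12 : G.dist u v = 1 ∨ G.dist u v = 2 := by omega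
    rcases hd12 with hd | hd
    · -- dist = 1 : u and v adjacent
      have huv : G.Adj u v := SimpleGraph.dist_eq_one_iff_adj.mp hd
      obtain ⟨x, y, hux, huy, hxy, hxv, hyv⟩ := pick_tri hone hu v
      obtain ⟨x', y', hvx, hvy, hxy', hxu, hyu⟩ := pick_tri hone hv u
      by_cases hint : x' = x ∨ x' = y ∨ y' = x ∨ y' = y
      · rcases hint with rfl | rfl | rfl | rfl
        · exact common_le hone hux huy hxy huv hvx.symm hyv
        · exact common_le hone huy hux hxy.symm huv hvx.symm hxv
        · exact common_le hone hux huy hxy huv hvy.symm hyv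
        · exact common_le hone huy hux hxy.symm huv hvy.symm hxv
      · push_neg at hint
        obtain ⟨hx'x, hx'y, hy'x, hy'y⟩ := hint
        exact hP6 ⟨x, y, u, v, x', y',
          nodup6 hxy.ne hux.ne' hxv (Ne.symm hx'x) (Ne.symm hy'x)
            huy.ne' hyv (Ne.symm hx'y) (Ne.symm hy'y)
            hne (Ne.symm hxu) (Ne.symm hyu)
            hvx.ne hvy.ne hxy'.ne,
          hxy, huy.symm, huv, hvx, hxy'⟩
    · -- dist = 2
      obtain ⟨W, hW⟩ := SimpleGraph.exists_walk_of_dist_ne_zero (G := G) (u := u) (v := v) (by omega)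
      have hlen : W.length = 2 := by omega
      set w := W.getVert 1 with hwdef
      have huw : G.Adj u w := by
        have := W.adj_getVert_succ (i := 0) (by omega)
        simpa using this
      have hwv : G.Adj w v := by
        have := W.adj_getVert_succ (i := 1) (by omega)
        have h2 : W.getVert 2 = v := by
          rw [← hlen]; exact W.getVert_length
        rwa [h2] at this
      have hnadj : ¬ G.Adj u v := by
        intro h
        have := SimpleGraph.dist_eq_one_iff_adj.mpr h
        omega
      obtain ⟨x, y, hux, huy, hxy, hxw, hyw⟩ := pick_tri hone hu w
      obtain ⟨x', y', hvx, hvy, hxy', hx'w, hy'w⟩ := pick_tri hone hv w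
      have hxv : x ≠ v := fun h => hnadj (h ▸ hux)
      have hyv : y ≠ v := fun h => hnadj (h ▸ huy)
      have hx'u : x' ≠ u := fun h => hnadj (h ▸ hvx).symm
      have hy'u : y' ≠ u := fun h => hnadj (h ▸ hvy).symm
      have hwu : w ≠ u := huw.ne'
      have hwvne : w ≠ v := hwv.ne
      -- find z ∈ {x', y'} with z ∉ {x, y}
      have hz : ∃ z, G.Adj v z ∧ z ≠ w ∧ z ≠ u ∧ z ≠ x ∧ z ≠ y := by
        by_cases hx' : x' ≠ x ∧ x' ≠ y
        · exact ⟨x', hvx, hx'w, hx'u, hx'.1, hx'.2⟩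
        by_cases hy' : y' ≠ x ∧ y' ≠ y
        · exact ⟨y', hvy, hy'w, hy'u, hy'.1, hy'.2⟩
        exfalso
        push_neg at hx' hy'
        have hx'2 : x' = x ∨ x' = y := by
          by_cases h : x' = x
          · exact Or.inl h
          · exact Or.inr (hx' h)
        have hy'2 : y' = x ∨ y' = y := by
          by_cases h : y' = x
          · exact Or.inl h
          · exact Or.inr (hy' h)
        rcases hx'2 with rfl | rfl <;> rcases hy'2 with rfl | rfl
        · exact hxy'.ne rfl
        · exact common_le hone hxy hux.symm huy.symm hvx.symm hvy.symm hne
        · exact common_le hone hxy hux.symm huy.symm hvy.symm hvx.symm hne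
        · exact hxy'.ne rfl
      obtain ⟨z, hvz, hzw, hzu, hzx, hzy⟩ := hz
      exact hP6 ⟨x, y, u, w, v, z,
        nodup6 hxy.ne hux.ne' hxw hxv (Ne.symm hzx)
          huy.ne' hyw hyv (Ne.symm hzy)
          (Ne.symm hwu) hne (Ne.symm hzu)
          hwvne (Ne.symm hzw)
          hvz.ne,
        hxy, huy.symm, huw, hwv, hvz⟩
  · -- dist ≥ 3
    obtain ⟨W, hW⟩ := SimpleGraph.exists_walk_of_dist_ne_zero (G := G) (u := u) (v := v) (by omega)
    have hlen : 3 ≤ W.length := by omega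
    set p₁ := W.getVert 1 with hp1
    set p₂ := W.getVert 2 with hp2
    set p₃ := W.getVert 3 with hp3
    have hd1 : G.dist u p₁ = 1 := dist_getVert hconn W hW 1 (by omega)
    have hd2 : G.dist u p₂ = 2 := dist_getVert hconn W hW 2 (by omega)
    have hd3' : G.dist u p₃ = 3 := dist_getVert hconn W hW 3 (by omega)
    have h01 : G.Adj u p₁ := by
      have := W.adj_getVert_succ (i := 0) (by omega)
      simpa using this
    have h12 : G.Adj p₁ p₂ := W.adj_getVert_succ (i := 1) (by omega)
    have h23 : G.Adj p₂ p₃ := W.adj_getVert_succ (i := 2) (by omega)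
    obtain ⟨x, y, hux, huy, hxy, hxp, hyp⟩ := pick_tri hone hu p₁
    have hdx : G.dist u x = 1 := SimpleGraph.dist_eq_one_iff_adj.mpr hux
    have hdy : G.dist u y = 1 := SimpleGraph.dist_eq_one_iff_adj.mpr huy
    have hxp2 : x ≠ p₂ := fun h => by rw [h, hd2] at hdx; omega
    have hxp3 : x ≠ p₃ := fun h => by rw [h, hd3'] at hdx; omega
    have hyp2 : y ≠ p₂ := fun h => by rw [h, hd2] at hdy; omega
    have hyp3 : y ≠ p₃ := fun h => by rw [h, hd3'] at hdy; omega
    have hup1 : u ≠ p₁ := fun h => by rw [← h, G.dist_self] at hd1; omega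
    have hup2 : u ≠ p₂ := fun h => by rw [← h, G.dist_self] at hd2; omega
    have hup3 : u ≠ p₃ := fun h => by rw [← h, G.dist_self] at hd3'; omega
    have hp12 : p₁ ≠ p₂ := fun h => by rw [h] at hd1; omega
    have hp13 : p₁ ≠ p₃ := fun h => by rw [h] at hd1; omega
    have hp23 : p₂ ≠ p₃ := fun h => by rw [h] at hd2; omega
    exact hP6 ⟨x, y, u, p₁, p₂, p₃,
      nodup6 hxy.ne hux.ne' hxp hxp2 hxp3
        huy.ne' hyp hyp2 hyp3
        hup1 hup2 hup3
        hp12 hp13 hp23,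
      hxy, huy.symm, h01, h12, h23⟩
end

section
/- Let G be a connected P_6-free finite simple graph on m vertices in which every edge lies in at most one triangle. Then twice the number of triangles of G is at most m − 1; in particular G has at most (m−1)/2 triangles. -/
open SimpleGraph Finset
set_option linter.unusedSectionVars false
set_option maxHeartbeats 1000000
section
variable {V : Type*} [Fintype V] [DecidableEq V] {G : SimpleGraph V} [DecidableRel G.Adj]

lemma p6_of (hP6 : P6Free G)
    {v₁ v₂ v₃ v₄ v₅ v₆ : V}
    (h12 : v₁ ≠ v₂) (h13 : v₁ ≠ v₃) (h14 : v₁ ≠ v₄) (h15 : v₁ ≠ v₅) (h16 : v₁ ≠ v₆)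
    (h23 : v₂ ≠ v₃) (h24 : v₂ ≠ v₄) (h25 : v₂ ≠ v₅) (h26 : v₂ ≠ v₆)
    (h34 : v₃ ≠ v₄) (h35 : v₃ ≠ v₅) (h36 : v₃ ≠ v₆)
    (h45 : v₄ ≠ v₅) (h46 : v₄ ≠ v₆) (h56 : v₅ ≠ v₆)
    (a12 : G.Adj v₁ v₂) (a23 : G.Adj v₂ v₃) (a34 : G.Adj v₃ v₄)
    (a45 : G.Adj v₄ v₅) (a56 : G.Adj v₅ v₆) : False :=
  hP6 ⟨v₁, v₂, v₃, v₄, v₅, v₆, by simp_all, a12, a23, a34, a45, a56⟩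

lemma getVert_inj {u v : V} (p : G.Walk u v) (hp : p.IsPath) :
    ∀ i j, i ≤ p.length → j ≤ p.length → p.getVert i = p.getVert j → i = j := by
  induction p with
  | nil => intro i j hi hj _; simp at hi hj; omega
  | cons h q ih =>
    rw [Walk.cons_isPath_iff] at hp
    intro i j hi hj hveq
    match i, j with
    | 0, 0 => rfl
    | 0, j+1 =>
      exfalso; apply hp.2
      rw [Walk.mem_support_iff_exists_getVert]
      exact ⟨j, by simpa [Walk.getVert_cons_succ, Walk.getVert_zero] using hveq.symm,
        by simpa using hj⟩
    | i+1, 0 =>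
      exfalso; apply hp.2
      rw [Walk.mem_support_iff_exists_getVert]
      exact ⟨i, by simpa [Walk.getVert_cons_succ, Walk.getVert_zero] using hveq,
        by simpa using hi⟩
    | i+1, j+1 =>
      have := ih hp.1 i j (by simpa using hi) (by simpa using hj)
        (by simpa [Walk.getVert_cons_succ] using hveq)
      omega

lemma tri_card {s : Finset V} (hs : s ∈ G.cliqueFinset 3) : s.card = 3 :=
  ((SimpleGraph.mem_cliqueFinset_iff).1 hs).2

lemma tri_adj {s : Finset V} (hs : s ∈ G.cliqueFinset 3) {x y : V}
    (hx : x ∈ s) (hy : y ∈ s) (hxy : x ≠ y) : G.Adj x y :=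
  ((SimpleGraph.mem_cliqueFinset_iff).1 hs).1 (Finset.mem_coe.2 hx) (Finset.mem_coe.2 hy) hxy

lemma tri_two {s : Finset V} (hs : s ∈ G.cliqueFinset 3) {x : V} (hx : x ∈ s) :
    ∃ a b, a ∈ s ∧ b ∈ s ∧ a ≠ b ∧ a ≠ x ∧ b ≠ x := by
  have h2 : (s.erase x).card = 2 := by
    rw [Finset.card_erase_of_mem hx, tri_card hs]
  obtain ⟨a, b, hab, he⟩ := Finset.card_eq_two.1 h2
  have ha : a ∈ s.erase x := by rw [he]; simp
  have hb : b ∈ s.erase x := by rw [he]; simp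
  exact ⟨a, b, Finset.mem_of_mem_erase ha, Finset.mem_of_mem_erase hb, hab,
    Finset.ne_of_mem_erase ha, Finset.ne_of_mem_erase hb⟩

lemma tri_meet (hconn : G.Connected) (hP6 : P6Free G)
    {s t : Finset V} (hs : s ∈ G.cliqueFinset 3) (ht : t ∈ G.cliqueFinset 3) :
    (s ∩ t).Nonempty := by
  by_contra hemp
  have hdisj : ∀ x, x ∈ s → x ∈ t → False := by
    intro x hx1 hx2; exact hemp ⟨x, Finset.mem_inter.2 ⟨hx1, hx2⟩⟩
  have hsne : s.Nonempty := Finset.card_pos.1 (by rw [tri_card hs]; omega)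
  have htne : t.Nonempty := Finset.card_pos.1 (by rw [tri_card ht]; omega)
  obtain ⟨x0, hx0⟩ := hsne
  obtain ⟨y0, hy0⟩ := htne
  obtain ⟨⟨x, y⟩, hmem, hmin⟩ := Finset.exists_min_image (s ×ˢ t) (fun p => G.dist p.1 p.2)
    ⟨(x0, y0), Finset.mem_product.2 ⟨hx0, hy0⟩⟩
  rw [Finset.mem_product] at hmem
  obtain ⟨hxs, hyt⟩ := hmem
  have hmin' : ∀ x' ∈ s, ∀ y' ∈ t, G.dist x y ≤ G.dist x' y' := by
    intro x' hx' y' hy'; exact hmin (x', y') (Finset.mem_product.2 ⟨hx', hy'⟩)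
  have hxy : x ≠ y := fun h => hdisj x hxs (h ▸ hyt)
  have hd1 : 1 ≤ G.dist x y := hconn.pos_dist_of_ne hxy
  obtain ⟨p, hpath, hplen⟩ := hconn.exists_path_of_dist x y
  have hsupS : ∀ z ∈ p.support, z ≠ x → z ∉ s := by
    intro z hz hzx hzs
    have ht1 : (p.takeUntil z hz).length + (p.dropUntil z hz).length = p.length := by
      have := congrArg Walk.length (p.take_spec hz)
      rwa [Walk.length_append] at this
    have h1 : G.dist x z ≤ (p.takeUntil z hz).length := SimpleGraph.dist_le _
    have h2 : G.dist z y ≤ (p.dropUntil z hz).length := SimpleGraph.dist_le _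
    have h3 : 1 ≤ G.dist x z := hconn.pos_dist_of_ne (Ne.symm hzx)
    have h4 : G.dist x y ≤ G.dist z y := hmin' z hzs y hyt
    omega
  have hsupT : ∀ z ∈ p.support, z ≠ y → z ∉ t := by
    intro z hz hzy hzt
    have ht1 : (p.takeUntil z hz).length + (p.dropUntil z hz).length = p.length := by
      have := congrArg Walk.length (p.take_spec hz)
      rwa [Walk.length_append] at this
    have h1 : G.dist x z ≤ (p.takeUntil z hz).length := SimpleGraph.dist_le _
    have h2 : G.dist z y ≤ (p.dropUntil z hz).length := SimpleGraph.dist_le _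
    have h3 : 1 ≤ G.dist z y := hconn.pos_dist_of_ne hzy
    have h4 : G.dist x y ≤ G.dist x z := hmin' x hxs z hzt
    omega
  obtain ⟨a, b, has, hbs, hab, hax, hbx⟩ := tri_two hs hxs
  obtain ⟨c, e, hct, het, hce, hcy, hey⟩ := tri_two ht hyt
  have hl1 : 1 ≤ p.length := by omega
  have inj := getVert_inj p hpath
  have hgv0 : p.getVert 0 = x := p.getVert_zero
  have hgvl : p.getVert p.length = y := p.getVert_length
  -- cross-disjointness helpers
  have hbnot : ∀ z ∈ t, b ≠ z := fun z hz h => hdisj b hbs (h ▸ hz)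
  have hanot : ∀ z ∈ t, a ≠ z := fun z hz h => hdisj a has (h ▸ hz)
  have hxnot : ∀ z ∈ t, x ≠ z := fun z hz h => hdisj x hxs (h ▸ hz)
  rcases Nat.lt_or_ge p.length 3 with h3 | h3
  · -- length 1 or 2
    interval_cases hl : p.length
    · -- length 1 : b a x y c e
      have hy1 : p.getVert 1 = y := by
        have := p.getVert_length
        rwa [show p.length = 1 by omega] at this
      have haxy : G.Adj x y := by
        have h := p.adj_getVert_succ (show 0 < p.length by omega)
        rwa [hgv0, show (0:ℕ)+1 = 1 from rfl, hy1] at h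
      exact p6_of hP6 hab.symm hbx (hbnot y hyt) (hbnot c hct) (hbnot e het)
        hax (hanot y hyt) (hanot c hct) (hanot e het)
        hxy (hxnot c hct) (hxnot e het) hcy.symm hey.symm hce
        (tri_adj hs hbs has hab.symm) (tri_adj hs has hxs hax) haxy
        (tri_adj ht hyt hct hcy.symm) (tri_adj ht hct het hce)
    · -- length 2 : b a x z y c  with z = getVert 1
      set z := p.getVert 1 with hz
      have hzmem : z ∈ p.support := Walk.mem_support_iff_exists_getVert.2 ⟨1, rfl, by omega⟩
      have haxz : G.Adj x z := by
        have := p.adj_getVert_succ (by omega : 0 < p.length)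
        rwa [hgv0] at this
      have hy2 : p.getVert 2 = y := by
        have := p.getVert_length
        rwa [show p.length = 2 by omega] at this
      have hazy : G.Adj z y := by
        have h := p.adj_getVert_succ (show 1 < p.length by omega)
        rwa [show (1:ℕ)+1 = 2 from rfl, hy2] at h
      have hzs : z ∉ s := hsupS z hzmem haxz.ne'
      have hzt : z ∉ t := hsupT z hzmem hazy.ne
      exact p6_of hP6 hab.symm hbx (fun h => hzs (by rw [← h]; exact hbs)) (hbnot y hyt) (hbnot c hct)
        hax (fun h => hzs (by rw [← h]; exact has)) (hanot y hyt) (hanot c hct)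
        haxz.ne hxy (hxnot c hct)
        hazy.ne (fun h => hzt (by rw [h]; exact hct)) hcy.symm
        (tri_adj hs hbs has hab.symm) (tri_adj hs has hxs hax) haxz hazy
        (tri_adj ht hyt hct hcy.symm)
  · -- length ≥ 3 : b a x w1 w2 w3
    have hw : ∀ i : ℕ, i ≤ 3 → p.getVert i ∈ p.support :=
      fun i hi => Walk.mem_support_iff_exists_getVert.2 ⟨i, rfl, by omega⟩
    have hwx : ∀ i : ℕ, 1 ≤ i → i ≤ 3 → p.getVert i ≠ x := by
      intro i h1 h2 h
      have := inj i 0 (by omega) (by omega) (h.trans hgv0.symm)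
      omega
    have hws : ∀ i : ℕ, 1 ≤ i → i ≤ 3 → p.getVert i ∉ s :=
      fun i h1 h2 => hsupS _ (hw i h2) (hwx i h1 h2)
    have hwne : ∀ i j : ℕ, i ≤ 3 → j ≤ 3 → i ≠ j → p.getVert i ≠ p.getVert j :=
      fun i j hi hj hij h => hij (inj i j (by omega) (by omega) h)
    have hwadj : ∀ i : ℕ, i < 3 → G.Adj (p.getVert i) (p.getVert (i+1)) :=
      fun i hi => p.adj_getVert_succ (by omega)
    have hax1 : G.Adj x (p.getVert 1) := by
      have h := hwadj 0 (by omega)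
      rwa [hgv0, show (0:ℕ)+1 = 1 from rfl] at h
    exact p6_of hP6 hab.symm hbx
      (fun h => hws 1 (by omega) (by omega) (by rw [← h]; exact hbs))
      (fun h => hws 2 (by omega) (by omega) (by rw [← h]; exact hbs))
      (fun h => hws 3 (by omega) (by omega) (by rw [← h]; exact hbs))
      hax
      (fun h => hws 1 (by omega) (by omega) (by rw [← h]; exact has))
      (fun h => hws 2 (by omega) (by omega) (by rw [← h]; exact has))
      (fun h => hws 3 (by omega) (by omega) (by rw [← h]; exact has))
      (fun h => hwx 1 (by omega) (by omega) h.symm)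
      (fun h => hwx 2 (by omega) (by omega) h.symm)
      (fun h => hwx 3 (by omega) (by omega) h.symm)
      (hwne 1 2 (by omega) (by omega) (by omega))
      (hwne 1 3 (by omega) (by omega) (by omega))
      (hwne 2 3 (by omega) (by omega) (by omega))
      (tri_adj hs hbs has hab.symm) (tri_adj hs has hxs hax) hax1
      (hwadj 1 (by omega)) (hwadj 2 (by omega))

lemma tri_third {s : Finset V} (hs : s ∈ G.cliqueFinset 3) {x y : V}
    (hx : x ∈ s) (hy : y ∈ s) (hxy : x ≠ y) :
    ∃ w, w ∈ s ∧ w ≠ x ∧ w ≠ y := by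
  have h1 : ((s.erase x).erase y).card = 1 := by
    rw [Finset.card_erase_of_mem (Finset.mem_erase.2 ⟨hxy.symm, hy⟩),
      Finset.card_erase_of_mem hx, tri_card hs]
  obtain ⟨w, hw⟩ := Finset.card_eq_one.1 h1
  have hwm : w ∈ (s.erase x).erase y := by rw [hw]; simp
  simp only [Finset.mem_erase] at hwm
  exact ⟨w, hwm.2.2, hwm.2.1, hwm.1⟩

/-- distinct triangles meet in at most one vertex -/
lemma tri_inter (hone : ∀ u v : V, G.Adj u v → {z : V | G.Adj u z ∧ G.Adj v z}.ncard ≤ 1)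
    {s t : Finset V} (hs : s ∈ G.cliqueFinset 3) (ht : t ∈ G.cliqueFinset 3) (hst : s ≠ t)
    {x y : V} (hxs : x ∈ s) (hxt : x ∈ t) (hys : y ∈ s) (hyt : y ∈ t) : x = y := by
  by_contra hxy
  obtain ⟨ws, hws, hwsx, hwsy⟩ := tri_third hs hxs hys hxy
  obtain ⟨wt, hwt, hwtx, hwty⟩ := tri_third ht hxt hyt hxy
  have hadj := tri_adj hs hxs hys hxy
  have hwswt : ws ≠ wt := by
    rintro rfl
    apply hst
    have h3 : ({x, y, ws} : Finset V).card = 3 := by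
      rw [Finset.card_insert_of_notMem (by simp [hxy, hwsx.symm]),
        Finset.card_insert_of_notMem (by simp [hwsy.symm])]
      rfl
    have hsub : ({x, y, ws} : Finset V) ⊆ s := by
      intro z hz; simp at hz; rcases hz with rfl | rfl | rfl <;> assumption
    have hsub' : ({x, y, ws} : Finset V) ⊆ t := by
      intro z hz; simp at hz; rcases hz with rfl | rfl | rfl <;> assumption
    rw [← Finset.eq_of_subset_of_card_le hsub (by rw [tri_card hs, h3]),
      ← Finset.eq_of_subset_of_card_le hsub' (by rw [tri_card ht, h3])]
  have hsubset : ({ws, wt} : Set V) ⊆ {z : V | G.Adj x z ∧ G.Adj y z} := by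
    rintro z (rfl | rfl)
    · exact ⟨tri_adj hs hxs hws hwsx.symm, tri_adj hs hys hws hwsy.symm⟩
    · exact ⟨tri_adj ht hxt hwt hwtx.symm, tri_adj ht hyt hwt hwty.symm⟩
  have h2 : ({ws, wt} : Set V).ncard = 2 := Set.ncard_pair hwswt
  have := Set.ncard_le_ncard hsubset (Set.toFinite _)
  have := hone x y hadj
  omega
lemma matched_case (hP6 : P6Free G)
    (hone : ∀ u v : V, G.Adj u v → {z : V | G.Adj u z ∧ G.Adj v z}.ncard ≤ 1)
    {s0 s1 s : Finset V} (hs0 : s0 ∈ G.cliqueFinset 3) (hs1 : s1 ∈ G.cliqueFinset 3)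
    (hss : s ∈ G.cliqueFinset 3) (hS1 : s1 ≠ s)
    {v u w a b c e : V}
    (hv0 : v ∈ s0) (hu0 : u ∈ s0) (hw0 : w ∈ s0) (hv1 : v ∈ s1) (hus : u ∈ s)
    (hvu : v ≠ u) (hwv : w ≠ v) (hwu : w ≠ u)
    (ha1 : a ∈ s1) (hb1 : b ∈ s1) (hab : a ≠ b) (hav : a ≠ v) (hbv : b ≠ v)
    (hans0 : a ∉ s0) (hbns0 : b ∉ s0)
    (hcs : c ∈ s) (hes : e ∈ s) (hce : c ≠ e) (hcu : c ≠ u) (heu : e ≠ u)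
    (hcns0 : c ∉ s0) (hens0 : e ∉ s0)
    (hac : a = c) : False := by
  have hbe : b ≠ e := by
    intro hbe
    apply hab
    exact tri_inter hone hs1 hss hS1 ha1 (by rw [hac]; exact hcs) hb1 (by rw [hbe]; exact hes)
  have hea : e ≠ a := fun h => hce (by rw [← hac]; exact h.symm)
  -- path b v w u e a
  exact p6_of hP6 hbv (fun h => hbns0 (by rw [h]; exact hw0))
    (fun h => hbns0 (by rw [h]; exact hu0)) hbe hab.symm
    hwv.symm hvu (fun h => hens0 (by rw [← h]; exact hv0)) hav.symm
    hwu (fun h => hens0 (by rw [← h]; exact hw0)) (fun h => hans0 (by rw [← h]; exact hw0))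
    heu.symm (fun h => hans0 (by rw [← h]; exact hu0)) hea
    (tri_adj hs1 hb1 hv1 hbv) (tri_adj hs0 hv0 hw0 hwv.symm) (tri_adj hs0 hw0 hu0 hwu)
    (tri_adj hss hus hes heu.symm) (by rw [hac]; exact tri_adj hss hes hcs hce.symm)

lemma no_two_centers (hP6 : P6Free G)
    (hone : ∀ u v : V, G.Adj u v → {z : V | G.Adj u z ∧ G.Adj v z}.ncard ≤ 1)
    {s0 s1 s : Finset V} (hs0 : s0 ∈ G.cliqueFinset 3) (hs1 : s1 ∈ G.cliqueFinset 3)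
    (hss : s ∈ G.cliqueFinset 3) (hs1ne : s1 ≠ s0) (hsne : s ≠ s0)
    {v u : V} (hv0 : v ∈ s0) (hv1 : v ∈ s1) (hu0 : u ∈ s0) (hus : u ∈ s)
    (huv : u ≠ v) : False := by
  obtain ⟨w, hw0, hwv, hwu⟩ := tri_third hs0 hv0 hu0 huv.symm
  obtain ⟨a, b, ha1, hb1, hab, hav, hbv⟩ := tri_two hs1 hv1
  obtain ⟨c, e, hcs, hes, hce, hcu, heu⟩ := tri_two hss hus
  have hans0 : a ∉ s0 := fun h =>
    hav (tri_inter hone hs0 hs1 hs1ne.symm h ha1 hv0 hv1)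
  have hbns0 : b ∉ s0 := fun h =>
    hbv (tri_inter hone hs0 hs1 hs1ne.symm h hb1 hv0 hv1)
  have hcns0 : c ∉ s0 := fun h =>
    hcu (tri_inter hone hs0 hss hsne.symm h hcs hu0 hus)
  have hens0 : e ∉ s0 := fun h =>
    heu (tri_inter hone hs0 hss hsne.symm h hes hu0 hus)
  have hS1 : s1 ≠ s := by
    intro h
    exact huv (tri_inter hone hs0 hs1 hs1ne.symm hu0 (by rw [h]; exact hus) hv0 hv1)
  by_cases hac : a = c
  · exact matched_case hP6 hone hs0 hs1 hss hS1 hv0 hu0 hw0 hv1 hus huv.symm hwv hwu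
      ha1 hb1 hab hav hbv hans0 hbns0 hcs hes hce hcu heu hcns0 hens0 hac
  · by_cases hae : a = e
    · exact matched_case hP6 hone hs0 hs1 hss hS1 hv0 hu0 hw0 hv1 hus huv.symm hwv hwu
        ha1 hb1 hab hav hbv hans0 hbns0 hes hcs hce.symm heu hcu hens0 hcns0 hae
    · by_cases hbc : b = c
      · exact matched_case hP6 hone hs0 hs1 hss hS1 hv0 hu0 hw0 hv1 hus huv.symm hwv hwu
          hb1 ha1 hab.symm hbv hav hbns0 hans0 hcs hes hce hcu heu hcns0 hens0 hbc
      · by_cases hbe : b = e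
        · exact matched_case hP6 hone hs0 hs1 hss hS1 hv0 hu0 hw0 hv1 hus huv.symm hwv hwu
            hb1 ha1 hab.symm hbv hav hbns0 hans0 hes hcs hce.symm heu hcu hens0 hcns0 hbe
        · -- path b a v u c e
          exact p6_of hP6 hab.symm hbv (fun h => hbns0 (by rw [h]; exact hu0)) hbc hbe
            hav (fun h => hans0 (by rw [h]; exact hu0)) hac hae
            huv.symm (fun h => hcns0 (by rw [← h]; exact hv0))
            (fun h => hens0 (by rw [← h]; exact hv0))
            hcu.symm (fun h => hens0 (by rw [← h]; exact hu0)) hce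
            (tri_adj hs1 hb1 ha1 hab.symm) (tri_adj hs1 ha1 hv1 hav)
            (tri_adj hs0 hv0 hu0 (huv.symm : v ≠ u).symm.symm) (tri_adj hss hus hcs hcu.symm)
            (tri_adj hss hcs hes hce)

end

/-- A connected `P₆`-free finite simple graph on `m` vertices in which every edge
lies in at most one triangle has at most `(m-1)/2` triangles. -/
theorem stmt6 {V : Type*} [Fintype V] [DecidableEq V] (G : SimpleGraph V)
    [DecidableRel G.Adj] (hconn : G.Connected) (hP6 : P6Free G)
    (hone : ∀ u v : V, G.Adj u v → {z : V | G.Adj u z ∧ G.Adj v z}.ncard ≤ 1)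
    (m : ℕ) (hm : Fintype.card V = m) :
    2 * (G.cliqueFinset 3).card ≤ m - 1 := by
  classical
  rcases (G.cliqueFinset 3).eq_empty_or_nonempty with hTe | hTne
  · rw [hTe]; simp
  · obtain ⟨s0, hs0⟩ := hTne
    have hvex : ∃ v : V, ∀ s ∈ G.cliqueFinset 3, v ∈ s := by
      by_cases hall : ∀ s ∈ G.cliqueFinset 3, s = s0
      · obtain ⟨v, hv⟩ : s0.Nonempty := Finset.card_pos.1 (by rw [tri_card hs0]; omega)
        exact ⟨v, fun s hsm => by rw [hall s hsm]; exact hv⟩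
      · push_neg at hall
        obtain ⟨s1, hs1, hs1ne⟩ := hall
        obtain ⟨v, hv⟩ := tri_meet hconn hP6 hs0 hs1
        rw [Finset.mem_inter] at hv
        refine ⟨v, fun s hsm => ?_⟩
        by_contra hvs
        have hsne : s ≠ s0 := fun h => hvs (by rw [h]; exact hv.1)
        obtain ⟨u, hu⟩ := tri_meet hconn hP6 hsm hs0
        rw [Finset.mem_inter] at hu
        have huv : u ≠ v := fun h => hvs (by rw [← h]; exact hu.1)
        exact no_two_centers hP6 hone hs0 hs1 hsm hs1ne hsne hv.1 hv.2 hu.2 hu.1 huv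
    obtain ⟨v, hv⟩ := hvex
    have hdisjf : ∀ s ∈ G.cliqueFinset 3, ∀ t ∈ G.cliqueFinset 3, s ≠ t →
        Disjoint (s.erase v) (t.erase v) := by
      intro s hsm t htm hst
      rw [Finset.disjoint_left]
      intro z hz1 hz2
      rw [Finset.mem_erase] at hz1 hz2
      exact hz1.1 (tri_inter hone hsm htm hst hz1.2 hz2.2 (hv s hsm) (hv t htm))
    have hcardB := Finset.card_biUnion hdisjf
    have hsum : ∑ s ∈ G.cliqueFinset 3, (s.erase v).card = 2 * (G.cliqueFinset 3).card := by
      rw [Finset.sum_congr rfl (fun s hsm => by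
        rw [Finset.card_erase_of_mem (hv s hsm), tri_card hsm])]
      rw [Finset.sum_const, smul_eq_mul, mul_comm]
    have hsub : (G.cliqueFinset 3).biUnion (fun s => s.erase v) ⊆ Finset.univ.erase v := by
      intro z hz
      rw [Finset.mem_biUnion] at hz
      obtain ⟨s, hsm, hzs⟩ := hz
      rw [Finset.mem_erase] at hzs ⊢
      exact ⟨hzs.1, Finset.mem_univ z⟩
    have hle := Finset.card_le_card hsub
    rw [hcardB, hsum] at hle
    have hcv : (Finset.univ.erase v).card = m - 1 := by
      rw [Finset.card_erase_of_mem (Finset.mem_univ v), Finset.card_univ, hm]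
    omega
end
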